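/- Let C be a monoidal category with geometric realizations, and A, B, C' three associative algebras in C. If c : B → N ⊗_A M exhibits N as left dual of the (A,B)-bimodule M, and c' : C' → N' ⊗_B M' exhibits N' as left dual of the (B,C')-bimodule M', then the composite C' → N' ⊗_B M' ≅ N' ⊗_B B ⊗_B M' → N' ⊗_B N ⊗_A M ⊗_B M' exhibits N' ⊗_B N as a left dual of M ⊗_B M'. -/

import Mathlib

/-!
Bimodules between algebras in `C` form a bicategory, and `ExhibitsLeftDual M N c` says exactly
that `c` is the unit of an adjunction `N ⊣ M` in it: its two conditions are the triangle
identities conjugated by unitors. Adjunctions compose, and the unit of the composite of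
`N' ⊣ M'` and `N ⊣ M` is `composedCoev`.
-/

namespace CategoryTheory.Bicategory

variable {B : Type*} [Bicategory B] {a b : B} {f : a ⟶ b} {g : b ⟶ a}

theorem leftZigzag_eq_iff (u : 𝟙 a ⟶ f ≫ g) (e : g ≫ f ⟶ 𝟙 b) :
    leftZigzag u e = (λ_ f).hom ≫ (ρ_ f).inv ↔
      (λ_ f).inv ≫ u ▷ f ≫ (α_ f g f).hom ≫ f ◁ e ≫ (ρ_ f).hom = 𝟙 f := by
  have hconj : leftZigzag u e =
      (λ_ f).hom ≫ ((λ_ f).inv ≫ u ▷ f ≫ (α_ f g f).hom ≫ f ◁ e ≫ (ρ_ f).hom) ≫ (ρ_ f).inv := by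
    bicategory
  rw [hconj, Iso.cancel_iso_hom_left, Iso.comp_inv_eq, Iso.inv_hom_id]

theorem rightZigzag_eq_iff (u : 𝟙 a ⟶ f ≫ g) (e : g ≫ f ⟶ 𝟙 b) :
    rightZigzag u e = (ρ_ g).hom ≫ (λ_ g).inv ↔
      (ρ_ g).inv ≫ g ◁ u ≫ (α_ g f g).inv ≫ e ▷ g ≫ (λ_ g).hom = 𝟙 g := by
  have hconj : rightZigzag u e =
      (ρ_ g).hom ≫ ((ρ_ g).inv ≫ g ◁ u ≫ (α_ g f g).inv ≫ e ▷ g ≫ (λ_ g).hom) ≫ (λ_ g).inv := by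
    bicategory
  rw [hconj, Iso.cancel_iso_hom_left, Iso.comp_inv_eq, Iso.inv_hom_id]

theorem Adjunction.comp_unit_eq {c : B} {f₁ : a ⟶ b} {g₁ : b ⟶ a} {f₂ : b ⟶ c} {g₂ : c ⟶ b}
    (adj₁ : f₁ ⊣ g₁) (adj₂ : f₂ ⊣ g₂) :
    (adj₁.comp adj₂).unit = adj₁.unit ≫ f₁ ◁ (λ_ g₁).inv ≫ f₁ ◁ (adj₂.unit ▷ g₁) ≫
      f₁ ◁ (α_ f₂ g₂ g₁).hom ≫ (α_ f₁ f₂ (g₂ ≫ g₁)).inv := by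
  dsimp only [Adjunction.comp, Adjunction.compUnit]
  bicategory

end CategoryTheory.Bicategory

open CategoryTheory MonoidalCategory CategoryTheory.Limits

universe v u

namespace Paper

variable {C : Type u} [Category.{v} C] [MonoidalCategory C]
  [HasCoequalizers C]
  [∀ X : C, PreservesColimitsOfSize.{0, 0} (tensorLeft X)]
  [∀ X : C, PreservesColimitsOfSize.{0, 0} (tensorRight X)]

/-- `c : B ⟶ N ⊗_A M` exhibits `N` as a left dual of the `(A,B)`-bimodule `M`
if there is an evaluation `e : M ⊗_B N ⟶ A` such that the two triangle
identities hold. -/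
noncomputable def ExhibitsLeftDual {Am Bm : Mon C} (Mb : Bimod Am Bm) (N : Bimod Bm Am)
    (c : Bimod.regular Bm ⟶ N.tensorBimod Mb) : Prop :=
  ∃ e : Mb.tensorBimod N ⟶ Bimod.regular Am,
    ((Bimod.rightUnitorBimod Mb).inv ≫ Bimod.whiskerLeft Mb c ≫
        (Bimod.associatorBimod Mb N Mb).inv ≫ Bimod.whiskerRight e Mb ≫
        (Bimod.leftUnitorBimod Mb).hom = 𝟙 Mb) ∧
    ((Bimod.leftUnitorBimod N).inv ≫ Bimod.whiskerRight c N ≫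
        (Bimod.associatorBimod N Mb N).hom ≫ Bimod.whiskerLeft N e ≫
        (Bimod.rightUnitorBimod N).hom = 𝟙 N)

variable {Am Bm Cm : Mon C}

/-- The composite coevaluation
`C' ⟶ N' ⊗_B M' ≅ N' ⊗_B B ⊗_B M' ⟶ N' ⊗_B N ⊗_A M ⊗_B M'`
(regrouped as `(N' ⊗_B N) ⊗_A (M ⊗_B M')`). -/
noncomputable def composedCoev
    (Mb : Bimod Am Bm) (N : Bimod Bm Am) (M' : Bimod Bm Cm) (N' : Bimod Cm Bm)
    (c : Bimod.regular Bm ⟶ N.tensorBimod Mb)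
    (c' : Bimod.regular Cm ⟶ N'.tensorBimod M') :
    Bimod.regular Cm ⟶ (N'.tensorBimod N).tensorBimod (Mb.tensorBimod M') :=
  c' ≫ Bimod.whiskerLeft N' (Bimod.leftUnitorBimod M').inv ≫
    Bimod.whiskerLeft N' (Bimod.whiskerRight c M') ≫
    Bimod.whiskerLeft N' (Bimod.associatorBimod N Mb M').hom ≫
    (Bimod.associatorBimod N' N (Mb.tensorBimod M')).inv

section MonBicategory

attribute [local instance] Bimod.monBicategory

theorem exhibitsLeftDual_iff_exists_adjunction (Mb : Bimod Am Bm) (N : Bimod Bm Am)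
    (c : Bimod.regular Bm ⟶ N.tensorBimod Mb) :
    ExhibitsLeftDual Mb N c ↔
      ∃ adj : @Bicategory.Adjunction (Mon C) _ Bm Am N Mb, adj.unit = c := by
  constructor
  · rintro ⟨e, hright, hleft⟩
    exact ⟨⟨c, e, (Bicategory.leftZigzag_eq_iff _ _).2 hleft,
      (Bicategory.rightZigzag_eq_iff _ _).2 hright⟩, rfl⟩
  · rintro ⟨adj, rfl⟩
    exact ⟨adj.counit, (Bicategory.rightZigzag_eq_iff _ _).1 adj.right_triangle,
      (Bicategory.leftZigzag_eq_iff _ _).1 adj.left_triangle⟩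

/-- **Composition of dual pairs of bimodules** (Lurie 4.6.2.6).  If
`c : B ⟶ N ⊗_A M` exhibits `N` as a left dual of the `(A,B)`-bimodule `M`,
and `c' : C' ⟶ N' ⊗_B M'` exhibits `N'` as a left dual of the
`(B,C')`-bimodule `M'`, then the composite
`C' ⟶ N' ⊗_B M' ≅ N' ⊗_B B ⊗_B M' ⟶ N' ⊗_B N ⊗_A M ⊗_B M'`
exhibits `N' ⊗_B N` as a left dual of `M ⊗_B M'`. -/
theorem exhibitsLeftDual_comp
    (Mb : Bimod Am Bm) (N : Bimod Bm Am) (M' : Bimod Bm Cm) (N' : Bimod Cm Bm)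
    (c : Bimod.regular Bm ⟶ N.tensorBimod Mb)
    (c' : Bimod.regular Cm ⟶ N'.tensorBimod M')
    (hc : ExhibitsLeftDual Mb N c) (hc' : ExhibitsLeftDual M' N' c') :
    ExhibitsLeftDual (Mb.tensorBimod M') (N'.tensorBimod N)
      (composedCoev Mb N M' N' c c') := by
  rw [exhibitsLeftDual_iff_exists_adjunction] at hc hc' ⊢
  obtain ⟨adj, rfl⟩ := hc
  obtain ⟨adj', rfl⟩ := hc'
  exact ⟨adj'.comp adj, Bicategory.Adjunction.comp_unit_eq adj' adj⟩

end MonBicategory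

end Paper
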